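/- Brown's identity: for a prior G on ℝ with marginal density f_G(x) = ∫ φ(x-θ) dG(θ), the Bayes risk of the posterior-mean rule δ^B(x) = x + f_G'(x)/f_G(x) satisfies r(G, δ^B) = 1 - I(f_G), where I(f) = ∫ (f'(x))²/f(x) dx is the Fisher information for location, provided G has compact support (ensuring all integrals converge). -/

import Mathlib

/-!
Write `s = f_G' / f_G` for the score of the marginal, so that `δᴮ(x) - θ = (x - θ) + s(x)`.
The loss splits into `(x - θ)²`, whose Gaussian integral is `1` for every `θ`, and the excess
`2 s(x) (x - θ) + s(x)²`. After Fubini, the excess is integrated over `θ` at fixed `x`;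
differentiating under the integral sign gives `∫ (x - θ) φ(x - θ) dG(θ) = -f_G'(x)`, so the
inner integral is `-2 f_G'²/f_G + f_G'²/f_G = -f_G'²/f_G`. Compact support of `G` bounds the
score by `|x| + R`, which makes every integrand dominated by a Gaussian times a quadratic.
-/

open MeasureTheory Real

/-- Standard Gaussian density. -/
noncomputable def gauss (u : ℝ) : ℝ := (Real.sqrt (2 * Real.pi))⁻¹ * Real.exp (-u ^ 2 / 2)

open ProbabilityTheory

lemma gauss_eq_gaussianPDFReal : gauss = gaussianPDFReal 0 1 := by
  ext u
  simp [gauss, gaussianPDFReal]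

lemma gauss_pos (u : ℝ) : 0 < gauss u := by
  rw [gauss_eq_gaussianPDFReal]
  exact gaussianPDFReal_pos _ _ _ one_ne_zero

@[fun_prop]
lemma continuous_gauss : Continuous gauss := by
  unfold gauss
  fun_prop

lemma hasDerivAt_gauss (u : ℝ) : HasDerivAt gauss (-u * gauss u) u := by
  have h : HasDerivAt (fun u : ℝ => -u ^ 2 / 2) (-u) u := by
    simpa using ((hasDerivAt_pow 2 u).neg.div_const 2).congr_deriv (by ring)
  exact (h.exp.const_mul _).congr_deriv (by unfold gauss; ring)

lemma inv_sqrt_two_pi_le_one : (√(2 * π))⁻¹ ≤ 1 :=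
  inv_le_one_of_one_le₀ <| Real.one_le_sqrt.2 <| by nlinarith [Real.pi_gt_three]

lemma gauss_le_one (u : ℝ) : gauss u ≤ 1 := by
  have : rexp (-u ^ 2 / 2) ≤ 1 := Real.exp_le_one_iff.2 <| by nlinarith [sq_nonneg u]
  unfold gauss
  nlinarith [inv_sqrt_two_pi_le_one, Real.exp_pos (-u ^ 2 / 2),
    inv_nonneg.2 (Real.sqrt_nonneg (2 * π))]

lemma abs_mul_gauss_le_one (u : ℝ) : |u| * gauss u ≤ 1 := by
  have hu : |u| ≤ rexp (u ^ 2 / 2) := by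
    nlinarith [Real.add_one_le_exp (u ^ 2 / 2), sq_abs u, sq_nonneg (|u| - 1)]
  have : |u| * rexp (-u ^ 2 / 2) ≤ 1 := by
    rw [neg_div, Real.exp_neg, ← div_eq_mul_inv]
    exact div_le_one_of_le₀ hu (Real.exp_pos _).le
  unfold gauss
  nlinarith [inv_sqrt_two_pi_le_one, inv_nonneg.2 (Real.sqrt_nonneg (2 * π)),
    mul_nonneg (abs_nonneg u) (Real.exp_pos (-u ^ 2 / 2)).le]

lemma integrable_gauss : Integrable gauss := by
  rw [gauss_eq_gaussianPDFReal]
  exact integrable_gaussianPDFReal _ _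

lemma integrable_sq_mul_gauss : Integrable (fun u : ℝ => u ^ 2 * gauss u) := by
  have := (integrable_rpow_mul_exp_neg_mul_sq (b := 1 / 2) (by norm_num)
    (s := 2) (by norm_num)).const_mul (√(2 * π))⁻¹
  refine this.congr (Filter.Eventually.of_forall fun u => ?_)
  simp only [gauss, Real.rpow_two]
  ring_nf

lemma integral_gauss : ∫ u, gauss u = 1 := by
  rw [gauss_eq_gaussianPDFReal]
  exact integral_gaussianPDFReal_eq_one _ one_ne_zero

lemma integral_sq_mul_gauss : ∫ u, u ^ 2 * gauss u = 1 := by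
  have hvar := variance_fun_id_gaussianReal (μ := 0) (v := 1)
  rw [variance_eq_integral measurable_id'.aemeasurable, integral_id_gaussianReal,
    integral_gaussianReal_eq_integral_smul one_ne_zero] at hvar
  simpa [gauss_eq_gaussianPDFReal, mul_comm] using hvar

noncomputable def score (f : ℝ → ℝ) (x : ℝ) : ℝ := deriv f x / f x

noncomputable def marginal (G : Measure ℝ) (y : ℝ) : ℝ := ∫ t, gauss (y - t) ∂G

section Marginal

variable (G : Measure ℝ) [IsFiniteMeasure G]

lemma integrable_gauss_sub (x : ℝ) : Integrable (fun t => gauss (x - t)) G :=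
  (integrable_const 1).mono' (by fun_prop) <| .of_forall fun t => by
    rw [Real.norm_of_nonneg (gauss_pos _).le]
    exact gauss_le_one _

lemma integrable_sub_mul_gauss_sub (x : ℝ) : Integrable (fun t => (x - t) * gauss (x - t)) G :=
  (integrable_const 1).mono' (by fun_prop) <| .of_forall fun t => by
    rw [Real.norm_eq_abs, abs_mul, abs_of_pos (gauss_pos _)]
    exact abs_mul_gauss_le_one _

lemma marginal_pos [NeZero G] (x : ℝ) : 0 < marginal G x := by
  rw [marginal, integral_pos_iff_support_of_nonneg (fun t => (gauss_pos _).le)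
    (integrable_gauss_sub G x), Function.support_eq_univ fun t => (gauss_pos _).ne']
  exact NeZero.pos _

lemma hasDerivAt_marginal (x : ℝ) :
    HasDerivAt (marginal G) (-∫ t, (x - t) * gauss (x - t) ∂G) x := by
  rw [← integral_neg]
  refine (hasDerivAt_integral_of_dominated_loc_of_deriv_le (bound := fun _ => 1)
    (F' := fun y t => -((y - t) * gauss (y - t))) (Metric.ball_mem_nhds x one_pos)
    (.of_forall fun y => by fun_prop) (integrable_gauss_sub G x)
    (by fun_prop) (.of_forall fun t y _ => ?_) (integrable_const 1)
    (.of_forall fun t y _ => ?_)).2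
  · rw [norm_neg, Real.norm_eq_abs, abs_mul, abs_of_pos (gauss_pos _)]
    exact abs_mul_gauss_le_one _
  · exact ((hasDerivAt_gauss (y - t)).comp_sub_const y t).congr_deriv (neg_mul _ _)

lemma continuous_marginal : Continuous (marginal G) :=
  continuous_iff_continuousAt.2 fun x => (hasDerivAt_marginal G x).continuousAt

lemma abs_score_marginal_le [NeZero G] {R : ℝ} (hsupp : ∀ᵐ t ∂G, t ∈ Set.Icc (-R) R) (x : ℝ) :
    |score (marginal G) x| ≤ |x| + R := by
  rw [score, abs_div, abs_of_pos (marginal_pos G x), div_le_iff₀ (marginal_pos G x),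
    (hasDerivAt_marginal G x).deriv, abs_neg, marginal, ← integral_const_mul]
  refine abs_integral_le_integral_abs.trans (integral_mono_ae
    (integrable_sub_mul_gauss_sub G x).abs ((integrable_gauss_sub G x).const_mul _) ?_)
  filter_upwards [hsupp] with t ht
  rw [abs_mul, abs_of_pos (gauss_pos _)]
  refine mul_le_mul_of_nonneg_right ?_ (gauss_pos _).le
  linarith [abs_sub x t, abs_le.2 ht]

end Marginal

lemma integrable_uncurry_of_abs_le_comp_sub {G : Measure ℝ} [IsFiniteMeasure G]
    {F : ℝ → ℝ → ℝ} {h : ℝ → ℝ} (hF : AEStronglyMeasurable (Function.uncurry F) (G.prod volume))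
    (hh : Integrable h) (hFh : ∀ᵐ t ∂G, ∀ x, |F t x| ≤ h (x - t)) :
    Integrable (Function.uncurry F) (G.prod volume) := by
  have hsec : ∀ᵐ t ∂G, Integrable (F t) := by
    filter_upwards [hFh, hF.prodMk_left] with t ht hmeas
    exact (hh.comp_sub_right t).mono' hmeas (.of_forall ht)
  refine (integrable_prod_iff hF).2 ⟨hsec, (integrable_const (∫ u, h u)).mono'
    hF.norm.integral_prod_right' ?_⟩
  filter_upwards [hFh, hsec] with t ht hint
  rw [Real.norm_of_nonneg (integral_nonneg fun x => norm_nonneg _),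
    ← integral_sub_right_eq_self h t]
  exact integral_mono hint.norm (hh.comp_sub_right t) ht

noncomputable def excessLoss (d : ℝ → ℝ) (t x : ℝ) : ℝ :=
  (((x + d x) - t) ^ 2 - (x - t) ^ 2) * gauss (x - t)

lemma abs_excessLoss_le {d : ℝ → ℝ} {R t x : ℝ} (hd : |d x| ≤ |x| + R) (ht : |t| ≤ R) :
    |excessLoss d t x| ≤ (5 * (x - t) ^ 2 + 16 * R ^ 2) * gauss (x - t) := by
  rw [excessLoss, abs_mul, abs_of_pos (gauss_pos _)]
  refine mul_le_mul_of_nonneg_right ?_ (gauss_pos _).le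
  have hdt : |d x| ≤ |x - t| + 2 * R := by linarith [abs_sub_abs_le_abs_sub x t]
  have hd2 : d x ^ 2 ≤ 2 * (x - t) ^ 2 + 8 * R ^ 2 := by
    nlinarith [sq_abs (d x), sq_abs (x - t), sq_nonneg (|x - t| - 2 * R),
      mul_self_le_mul_self (abs_nonneg _) hdt]
  rw [abs_le]
  constructor <;> nlinarith [sq_nonneg (d x + (x - t)), sq_nonneg (d x - (x - t))]

lemma integrable_excessLoss {G : Measure ℝ} [IsFiniteMeasure G] {R : ℝ}
    (hsupp : ∀ᵐ t ∂G, t ∈ Set.Icc (-R) R) {d : ℝ → ℝ} (hdm : Measurable d)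
    (hd : ∀ x, |d x| ≤ |x| + R) :
    Integrable (Function.uncurry (excessLoss d)) (G.prod volume) := by
  refine integrable_uncurry_of_abs_le_comp_sub ?_
    ((integrable_sq_mul_gauss.const_mul 5).add (integrable_gauss.const_mul (16 * R ^ 2)))
    (by filter_upwards [hsupp] with t ht x using
      (abs_excessLoss_le (hd x) (abs_le.2 ht)).trans_eq (by simp only [Pi.add_apply]; ring))
  unfold excessLoss Function.uncurry
  fun_prop

lemma integral_sq_mul_gauss_eq_one_add_excessLoss {d : ℝ → ℝ} {t : ℝ}
    (hint : Integrable (excessLoss d t)) :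
    ∫ x, ((x + d x) - t) ^ 2 * gauss (x - t) = 1 + ∫ x, excessLoss d t x :=
  calc ∫ x, ((x + d x) - t) ^ 2 * gauss (x - t)
      = ∫ x, ((x - t) ^ 2 * gauss (x - t) + excessLoss d t x) := by
        congr 1 with x
        rw [excessLoss]
        ring
    _ = (∫ x, (x - t) ^ 2 * gauss (x - t)) + ∫ x, excessLoss d t x :=
        integral_add (integrable_sq_mul_gauss.comp_sub_right t) hint
    _ = 1 + ∫ x, excessLoss d t x := by
        rw [integral_sub_right_eq_self (fun u => u ^ 2 * gauss u) t, integral_sq_mul_gauss]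

lemma integral_excessLoss_score_marginal (G : Measure ℝ) [IsFiniteMeasure G] [NeZero G] (x : ℝ) :
    ∫ t, excessLoss (score (marginal G)) t x ∂G =
      -(deriv (marginal G) x ^ 2 / marginal G x) := by
  have hf' : ∫ t, (x - t) * gauss (x - t) ∂G = -deriv (marginal G) x := by
    rw [(hasDerivAt_marginal G x).deriv, neg_neg]
  have hexp : ∀ t, excessLoss (score (marginal G)) t x =
      2 * score (marginal G) x * ((x - t) * gauss (x - t)) +
        score (marginal G) x ^ 2 * gauss (x - t) := fun t => by
    rw [excessLoss]
    ring
  rw [integral_congr_ae (.of_forall hexp), integral_add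
    ((integrable_sub_mul_gauss_sub G x).const_mul _) ((integrable_gauss_sub G x).const_mul _),
    integral_const_mul, integral_const_mul, hf', ← marginal, score]
  field_simp [(marginal_pos G x).ne']
  ring

/-- Brown's identity: for a compactly supported prior `G` with marginal density
`f_G = φ * G`, the Bayes risk of the posterior-mean rule `δᴮ(x) = x + f_G'(x)/f_G(x)`
equals `1 - I(f_G)` where `I(f) = ∫ f'(x)²/f(x) dx` is the Fisher information
for location. -/
theorem brown_identity (G : Measure ℝ) [IsProbabilityMeasure G]
    (R : ℝ) (hsupp : ∀ᵐ t ∂G, t ∈ Set.Icc (-R) R)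
    (fG : ℝ → ℝ) (hfG : ∀ y, fG y = ∫ t, gauss (y - t) ∂G) :
    ∫ t, (∫ x, ((x + deriv fG x / fG x) - t) ^ 2 * gauss (x - t)) ∂G =
      1 - ∫ x, (deriv fG x) ^ 2 / fG x := by
  obtain rfl : fG = marginal G := funext hfG
  have hint : Integrable (Function.uncurry (excessLoss (score (marginal G)))) (G.prod volume) :=
    integrable_excessLoss hsupp ((measurable_deriv _).div (continuous_marginal G).measurable)
      (abs_score_marginal_le G hsupp)
  have hint_left : Integrable (fun t => ∫ x, excessLoss (score (marginal G)) t x) G :=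
    hint.integral_prod_left
  calc ∫ t, (∫ x, ((x + score (marginal G) x) - t) ^ 2 * gauss (x - t)) ∂G
      = ∫ t, (1 + ∫ x, excessLoss (score (marginal G)) t x) ∂G :=
        integral_congr_ae <| hint.prod_right_ae.mono fun _ ht =>
          integral_sq_mul_gauss_eq_one_add_excessLoss ht
    _ = 1 + ∫ x, ∫ t, excessLoss (score (marginal G)) t x ∂G := by
        rw [integral_add (integrable_const 1) hint_left,
          integral_integral_swap hint, integral_const, probReal_univ, one_smul]
    _ = 1 - ∫ x, (deriv (marginal G) x) ^ 2 / marginal G x := by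
        simp_rw [integral_excessLoss_score_marginal, integral_neg, sub_eq_add_neg]
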